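/- Let 0 ≤ m < M, let x, y ∈ [m,M] with x < y, and let p ≥ 2. Define β_p(t) = ((M−t)(t−m)/(M−m))·((M−t)^{p−1} + (t−m)^{p−1}). Then (m + M − (x+y)/2)^p + (1/(2^p(p+1)))·|x−y|^p ≤ ((M+m−x)^{p+1} − (M+m−y)^{p+1}) / ((p+1)(y−x)) ≤ m^p + M^p − (x^p + y^p)/2 − (β_p(x) + β_p(y)) − 2|x−y|^p/((p+1)(p+2)). -/

import Mathlib

/-!
For `p ≥ 2` the power `t ↦ t ^ p` is superquadratic on `[0, ∞)`:
`a ^ p ≥ b ^ p + p b ^ (p - 1) (a - b) + |a - b| ^ p`, by a monotonicity argument resting on the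
superadditivity of `t ↦ t ^ (p - 1)`. For a superquadratic `f`, comparing `f t` with both endpoints
of `[u, v]` and weighting so that the linear terms cancel gives a chord inequality sharper than
convexity; at `t` and at `m + M - t` it yields Mercer's inequality
`f (m + M - t) + f t + 2 β t ≤ f m + f M`. Integrating superquadraticity at the midpoint, resp. the
chord inequality, over `[u, v] = [m + M - y, m + M - x]` bounds the mean of `t ^ p` from below and
above, with elementary power integrals as correction terms, and Mercer's inequality at `x` and `y`
turns `(u ^ p + v ^ p) / 2` into the stated upper bound.
-/

open Real intervalIntegral

/-- Superquadraticity on `[0, ∞)` in the sense of Abramovich, Jameson and Sinnamon. -/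
def Superquadratic (f : ℝ → ℝ) : Prop :=
  ∀ x, 0 ≤ x → ∃ c, ∀ y, 0 ≤ y → f x + c * (y - x) + f |y - x| ≤ f y

noncomputable def mercerBeta (f : ℝ → ℝ) (m M t : ℝ) : ℝ :=
  (t - m) / (M - m) * f (M - t) + (M - t) / (M - m) * f (t - m)

theorem integral_comp_abs_sub_eq_two_mul {g : ℝ → ℝ} (hg : Continuous g) (c : ℝ) {h : ℝ}
    (hh : 0 ≤ h) :
    ∫ t in (c - h)..(c + h), g |t - c| = 2 * ∫ s in 0..h, g s := by
  have hint : ∀ a b : ℝ, IntervalIntegrable (fun s => g |s|) MeasureTheory.volume a b :=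
    fun a b => (hg.comp continuous_abs).intervalIntegrable a b
  have hpos : ∫ s in 0..h, g |s| = ∫ s in 0..h, g s :=
    integral_congr fun s hs => by
      rw [Set.uIcc_of_le hh] at hs
      simp only [abs_of_nonneg hs.1]
  have hneg : ∫ s in (-h)..0, g |s| = ∫ s in 0..h, g |s| := by
    simpa using (integral_comp_neg (a := 0) (b := h) fun s => g |s|).symm
  rw [integral_comp_sub_right (fun s => g |s|), sub_sub_cancel_left, add_sub_cancel_left,
    ← integral_add_adjacent_intervals (hint _ 0) (hint 0 _), hneg, hpos, two_mul]

theorem integral_sub_mul_rpow {p L : ℝ} (hp : -1 < p) (hL : 0 ≤ L) :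
    ∫ s in 0..L, (L - s) * s ^ p = L ^ (p + 2) / ((p + 1) * (p + 2)) := by
  have hsplit : ∫ s in 0..L, (L - s) * s ^ p = ∫ s in 0..L, (L * s ^ p - s ^ (p + 1)) :=
    integral_congr fun s hs => by
      rw [Set.uIcc_of_le hL] at hs
      rw [rpow_add_one' hs.1 (by linarith)]
      ring
  have hpow : L ^ (p + 2) = L * L ^ (p + 1) := by
    rw [← one_add_one_eq_two, ← add_assoc, rpow_add_one' hL (by linarith), mul_comm]
  rw [hsplit, integral_sub ((intervalIntegrable_rpow' hp).const_mul L)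
      (intervalIntegrable_rpow' (by linarith)), integral_const_mul,
    integral_rpow (Or.inl hp), integral_rpow (Or.inl (by linarith)),
    zero_rpow (by linarith), zero_rpow (by linarith), add_assoc, one_add_one_eq_two, hpow]
  have : p + 1 ≠ 0 := by linarith
  have : p + 2 ≠ 0 := by linarith
  field_simp
  ring

namespace Superquadratic

variable {f : ℝ → ℝ}

theorem le_secant (hf : Superquadratic f) {u v t : ℝ} (hu : 0 ≤ u) (hut : u ≤ t)
    (htv : t ≤ v) :
    (v - u) * f t + (v - t) * f (t - u) + (t - u) * f (v - t) ≤
      (v - t) * f u + (t - u) * f v := by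
  obtain ⟨c, hc⟩ := hf t (hu.trans hut)
  have hcu := hc u hu
  have hcv := hc v (hu.trans (hut.trans htv))
  rw [abs_of_nonpos (sub_nonpos.2 hut), neg_sub] at hcu
  rw [abs_of_nonneg (sub_nonneg.2 htv)] at hcv
  linear_combination (v - t) * hcu + (t - u) * hcv

theorem jensen_mercer (hf : Superquadratic f) {m M t : ℝ} (hm : 0 ≤ m) (hmM : m < M)
    (ht : t ∈ Set.Icc m M) :
    f (m + M - t) + f t + 2 * mercerBeta f m M t ≤ f m + f M := by
  obtain ⟨hmt, htM⟩ := ht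
  have hsec := hf.le_secant hm hmt htM
  have hsec' := hf.le_secant hm (by linarith : m ≤ m + M - t) (by linarith : m + M - t ≤ M)
  rw [show M - (m + M - t) = t - m by ring, show m + M - t - m = M - t by ring] at hsec'
  have hMm : 0 < M - m := sub_pos.2 hmM
  rw [← mul_le_mul_iff_right₀ hMm]
  unfold mercerBeta
  field_simp
  linarith

theorem hermite_hadamard_left (hf : Superquadratic f) (hcont : Continuous f) {u v : ℝ}
    (hu : 0 ≤ u) (huv : u ≤ v) :
    (v - u) * f ((u + v) / 2) + 2 * ∫ s in 0..(v - u) / 2, f s ≤ ∫ t in u..v, f t := by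
  have hI {g : ℝ → ℝ} (hg : Continuous g) : IntervalIntegrable g MeasureTheory.volume u v :=
    hg.intervalIntegrable u v
  obtain ⟨C, hC⟩ := hf ((u + v) / 2) (by linarith)
  set c := (u + v) / 2
  have hmono := integral_mono_on huv (hI (by fun_prop)) (hI hcont)
    fun t ht => hC t (hu.trans ht.1)
  have hlin : ∫ t in u..v, (t - c) = 0 := by
    simp [integral_comp_sub_right (fun s => s), integral_id]
    ring
  have habs : ∫ t in u..v, f |t - c| = 2 * ∫ s in 0..(v - u) / 2, f s := by
    convert integral_comp_abs_sub_eq_two_mul hcont c (by linarith : 0 ≤ (v - u) / 2) using 2 <;>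
      ring
  rw [integral_add (hI (by fun_prop)) (hI (by fun_prop)),
    integral_add (hI (by fun_prop)) (hI (by fun_prop)), integral_const_mul, hlin, habs,
    intervalIntegral.integral_const, smul_eq_mul] at hmono
  linarith

theorem hermite_hadamard_right (hf : Superquadratic f) (hcont : Continuous f) {u v : ℝ}
    (hu : 0 ≤ u) (huv : u ≤ v) :
    (v - u) * (∫ t in u..v, f t) + 2 * ∫ s in 0..(v - u), (v - u - s) * f s ≤
      (v - u) ^ 2 / 2 * (f u + f v) := by
  have hI {g : ℝ → ℝ} (hg : Continuous g) : IntervalIntegrable g MeasureTheory.volume u v :=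
    hg.intervalIntegrable u v
  have hmono := integral_mono_on huv (hI (by fun_prop)) (hI (by fun_prop))
    fun t ht => hf.le_secant hu ht.1 ht.2
  have hleft : ∫ t in u..v, (v - t) * f (t - u) = ∫ s in 0..(v - u), (v - u - s) * f s := by
    simpa [sub_sub_sub_cancel_right] using
      integral_comp_sub_right (fun s => (v - u - s) * f s) u (a := u) (b := v)
  have hright : ∫ t in u..v, (t - u) * f (v - t) = ∫ s in 0..(v - u), (v - u - s) * f s := by
    simpa [sub_sub_sub_cancel_left] using
      integral_comp_sub_left (fun s => (v - u - s) * f s) v (a := u) (b := v)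
  rw [integral_add (hI (by fun_prop)) (hI (by fun_prop)),
    integral_add (hI (by fun_prop)) (hI (by fun_prop)),
    integral_add (hI (by fun_prop)) (hI (by fun_prop)), integral_const_mul, hleft, hright,
    integral_mul_const, integral_mul_const] at hmono
  have hv : ∫ t in u..v, (v - t) = (v - u) ^ 2 / 2 := by
    simp [integral_comp_sub_left (fun s => s), integral_id]
  have hu' : ∫ t in u..v, (t - u) = (v - u) ^ 2 / 2 := by
    simp [integral_comp_sub_right (fun s => s), integral_id]
  rw [hv, hu'] at hmono
  linarith

end Superquadratic

section rpow

variable {p : ℝ}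

lemma hasDerivAt_rpow_sub_mul (hp : 1 ≤ p) (b t : ℝ) :
    HasDerivAt (fun t : ℝ => t ^ p - p * b ^ (p - 1) * t)
      (p * t ^ (p - 1) - p * b ^ (p - 1)) t := by
  simpa using (hasDerivAt_rpow_const (x := t) (Or.inr hp)).fun_sub
    ((hasDerivAt_id' t).const_mul (p * b ^ (p - 1)))

lemma rpow_add_mul_add_rpow_le_of_le (hp : 2 ≤ p) {a b : ℝ} (hb : 0 ≤ b) (hba : b ≤ a) :
    b ^ p + p * b ^ (p - 1) * (a - b) + (a - b) ^ p ≤ a ^ p := by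
  have hp1 : 1 ≤ p := by linarith
  have hderiv (t : ℝ) : HasDerivAt (fun t : ℝ => t ^ p - p * b ^ (p - 1) * t - (t - b) ^ p)
      (p * t ^ (p - 1) - p * b ^ (p - 1) - p * (t - b) ^ (p - 1)) t := by
    simpa using (hasDerivAt_rpow_sub_mul hp1 b t).fun_sub
      (((hasDerivAt_id' t).sub_const b).rpow_const (Or.inr hp1))
  have hmono := monotoneOn_of_hasDerivWithinAt_nonneg (convex_Ici b)
    (fun t _ => (hderiv t).continuousAt.continuousWithinAt)
    (fun t _ => (hderiv t).hasDerivWithinAt) (fun t ht => by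
      rw [interior_Ici] at ht
      have := add_rpow_le_rpow_add hb (sub_nonneg.2 (le_of_lt ht)) (by linarith : 1 ≤ p - 1)
      rw [add_sub_cancel] at this
      nlinarith)
  have := hmono (Set.self_mem_Ici) hba hba
  simp only [sub_self, zero_rpow (by linarith : p ≠ 0)] at this
  linarith

lemma rpow_add_mul_add_rpow_le_of_ge (hp : 2 ≤ p) {a b : ℝ} (ha : 0 ≤ a) (hab : a ≤ b) :
    b ^ p + p * b ^ (p - 1) * (a - b) + (b - a) ^ p ≤ a ^ p := by
  have hp1 : 1 ≤ p := by linarith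
  have hderiv (t : ℝ) : HasDerivAt (fun t : ℝ => t ^ p - p * b ^ (p - 1) * t - (b - t) ^ p)
      (p * t ^ (p - 1) - p * b ^ (p - 1) + p * (b - t) ^ (p - 1)) t := by
    refine ((hasDerivAt_rpow_sub_mul hp1 b t).fun_sub
      (((hasDerivAt_id' t).const_sub b).rpow_const (Or.inr hp1))).congr_deriv ?_
    ring
  have hanti := antitoneOn_of_hasDerivWithinAt_nonpos (convex_Icc 0 b)
    (fun t _ => (hderiv t).continuousAt.continuousWithinAt)
    (fun t _ => (hderiv t).hasDerivWithinAt) (fun t ht => by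
      rw [interior_Icc] at ht
      have := add_rpow_le_rpow_add ht.1.le (sub_nonneg.2 ht.2.le) (by linarith : 1 ≤ p - 1)
      rw [add_sub_cancel] at this
      nlinarith)
  have := hanti ⟨ha, hab⟩ ⟨ha.trans hab, le_rfl⟩ hab
  simp only [sub_self, zero_rpow (by linarith : p ≠ 0)] at this
  linarith

theorem superquadratic_rpow (hp : 2 ≤ p) : Superquadratic (· ^ p) := by
  refine fun b hb => ⟨p * b ^ (p - 1), fun a ha => ?_⟩
  rcases le_total b a with hba | hab
  · rw [abs_of_nonneg (sub_nonneg.2 hba)]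
    exact rpow_add_mul_add_rpow_le_of_le hp hb hba
  · rw [abs_of_nonpos (sub_nonpos.2 hab), neg_sub]
    exact rpow_add_mul_add_rpow_le_of_ge hp ha hab

lemma mercerBeta_rpow {m M t : ℝ} (hp : 1 ≤ p) (ht : t ∈ Set.Icc m M) :
    mercerBeta (· ^ p) m M t =
      (M - t) * (t - m) / (M - m) * ((M - t) ^ (p - 1) + (t - m) ^ (p - 1)) := by
  have hpow {s : ℝ} (hs : 0 ≤ s) : s ^ p = s * s ^ (p - 1) := by
    rw [mul_comm, ← rpow_add_one' hs (by linarith), sub_add_cancel]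
  rw [mercerBeta, hpow (sub_nonneg.2 ht.2), hpow (sub_nonneg.2 ht.1)]
  ring

theorem hermite_hadamard_left_rpow (hp : 2 ≤ p) {u v : ℝ} (hu : 0 ≤ u) (huv : u < v) :
    ((u + v) / 2) ^ p + 1 / (2 ^ p * (p + 1)) * (v - u) ^ p ≤
      (v ^ (p + 1) - u ^ (p + 1)) / ((p + 1) * (v - u)) := by
  have hL : 0 < v - u := sub_pos.2 huv
  have h := (superquadratic_rpow hp).hermite_hadamard_left
    (continuous_rpow_const (by linarith)) hu huv.le
  simp only [integral_rpow (Or.inl (by linarith : -1 < p)), zero_rpow (by linarith : p + 1 ≠ 0),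
    sub_zero] at h
  have hhalf : ((v - u) / 2) ^ (p + 1) = (v - u) * (v - u) ^ p / (2 * 2 ^ p) := by
    rw [div_rpow hL.le zero_le_two, rpow_add_one hL.ne', rpow_add_one two_ne_zero]
    ring
  rw [← div_div (v ^ (p + 1) - u ^ (p + 1)), le_div_iff₀ hL]
  refine le_of_eq_of_le ?_ h
  rw [hhalf]
  field_simp

theorem hermite_hadamard_right_rpow (hp : 2 ≤ p) {u v : ℝ} (hu : 0 ≤ u) (huv : u < v) :
    (v ^ (p + 1) - u ^ (p + 1)) / ((p + 1) * (v - u)) ≤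
      (u ^ p + v ^ p) / 2 - 2 * (v - u) ^ p / ((p + 1) * (p + 2)) := by
  have hL : 0 < v - u := sub_pos.2 huv
  have h := (superquadratic_rpow hp).hermite_hadamard_right
    (continuous_rpow_const (by linarith)) hu huv.le
  rw [integral_rpow (Or.inl (by linarith)), integral_sub_mul_rpow (by linarith) hL.le] at h
  rw [← div_div (v ^ (p + 1) - u ^ (p + 1)), div_le_iff₀ hL, ← mul_le_mul_iff_right₀ hL]
  have hrhs : (v - u) * (((u ^ p + v ^ p) / 2 - 2 * (v - u) ^ p / ((p + 1) * (p + 2))) * (v - u)) =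
      (v - u) ^ 2 / 2 * (u ^ p + v ^ p) - 2 * ((v - u) ^ (p + 2) / ((p + 1) * (p + 2))) := by
    rw [rpow_add hL, rpow_two]
    ring
  linarith

end rpow

theorem mercer_hermite_hadamard_rpow
    (m M : ℝ) (hm : 0 ≤ m) (hmM : m < M)
    (x y : ℝ) (hx : x ∈ Set.Icc m M) (hy : y ∈ Set.Icc m M) (hxy : x < y)
    (p : ℝ) (hp : 2 ≤ p)
    (βp : ℝ → ℝ)
    (hβp : ∀ t ∈ Set.Icc m M,
      βp t = (M - t) * (t - m) / (M - m) * ((M - t) ^ (p - 1) + (t - m) ^ (p - 1))) :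
    (m + M - (x + y) / 2) ^ p + 1 / (2 ^ p * (p + 1)) * |x - y| ^ p ≤
        ((M + m - x) ^ (p + 1) - (M + m - y) ^ (p + 1)) / ((p + 1) * (y - x)) ∧
      ((M + m - x) ^ (p + 1) - (M + m - y) ^ (p + 1)) / ((p + 1) * (y - x)) ≤
        m ^ p + M ^ p - (x ^ p + y ^ p) / 2 - (βp x + βp y) -
          2 * |x - y| ^ p / ((p + 1) * (p + 2)) := by
  have hu : 0 ≤ M + m - y := by linarith [hy.2]
  have huv : M + m - y < M + m - x := by linarith
  have habs : |x - y| = (M + m - x) - (M + m - y) := by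
    rw [abs_sub_comm, abs_of_pos (sub_pos.2 hxy)]
    ring
  rw [habs, show y - x = (M + m - x) - (M + m - y) by ring]
  refine ⟨?_, (hermite_hadamard_right_rpow hp hu huv).trans ?_⟩
  · rw [show m + M - (x + y) / 2 = ((M + m - y) + (M + m - x)) / 2 by ring]
    exact hermite_hadamard_left_rpow hp hu huv
  · have hmercer {t : ℝ} (ht : t ∈ Set.Icc m M) :
        (M + m - t) ^ p + t ^ p + 2 * βp t ≤ m ^ p + M ^ p := by
      rw [hβp t ht, ← mercerBeta_rpow (by linarith) ht, add_comm M m]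
      exact (superquadratic_rpow hp).jensen_mercer hm hmM ht
    linarith [hmercer hx, hmercer hy]
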